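/- Let C be an additive category, F : C → C an additive automorphism, D an additive category, and G : C → D an additive functor equipped with a natural isomorphism η : G ∘ F ≅ G. Then G factors through the projection: there exists an additive functor H : C/F → D which agrees with G on objects, sends a homogeneous morphism f : X → F^j Y of degree j to the composite of G(f) with the isomorphism G(F^j Y) ≅ G(Y) obtained by iterating η, and satisfies H ∘ π = G as functors C → D. -/

import Mathlib

/-!
Statement 5: Let `C` be an additive category, `F : C → C` an additive automorphism,
`D` an additive category, and `G : C → D` an additive functor equipped with a natural
isomorphism `η : G ∘ F ≅ G`. Then `G` factors through the projection `π : C → C/F`: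
there exists an additive functor `H : C/F → D` agreeing with `G` on objects, sending a
homogeneous morphism `f : X → F^j Y` of degree `j` to `G(f)` composed with the
isomorphism `G(F^j Y) ≅ G(Y)` obtained by iterating `η`, and satisfying `H ∘ π = G`.
-/

open CategoryTheory CategoryTheory.Limits DirectSum

universe v u

namespace OrbitFormalization

variable (C : Type u) [Category.{v} C] [Preadditive C] [HasShift C ℤ]
  [∀ n : ℤ, (shiftFunctor C n).Additive]

/-- Objects of the orbit category `C/F`: the same as the objects of `C`. -/
structure Orbit where
  /-- the underlying object of `C` -/
  un : C

/-- Morphisms of the orbit category: `⊕_{j ∈ ℤ} Hom_C(X, F^j Y)`. -/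
abbrev OrbitHom (X Y : C) : Type _ :=
  DirectSum ℤ (fun j => X ⟶ (shiftFunctor C j).obj Y)

/-- Composition of homogeneous components: the composite of `f : X ⟶ F^r Y` (degree `r`)
and `g : Y ⟶ F^s Z` (degree `s`) is `F^r(g) ∘ f`, of degree `r + s`. -/
def hcomp {X Y Z : C} {r s : ℤ} (f : X ⟶ (shiftFunctor C r).obj Y)
    (g : Y ⟶ (shiftFunctor C s).obj Z) : X ⟶ (shiftFunctor C (r + s)).obj Z :=
  f ≫ (shiftFunctor C r).map g ≫ (shiftFunctorAdd' C s r (r + s) (add_comm s r)).inv.app Z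

/-- Composition of homogeneous components, as a bilinear map. -/
def hcompHom (X Y Z : C) (r s : ℤ) :
    (X ⟶ (shiftFunctor C r).obj Y) →+ ((Y ⟶ (shiftFunctor C s).obj Z) →+ OrbitHom C X Z) :=
  AddMonoidHom.mk'
    (fun f => AddMonoidHom.mk'
      (fun g => DirectSum.of (fun j => X ⟶ (shiftFunctor C j).obj Z) (r + s) (hcomp C f g))
      (fun g g' => by
        rw [← map_add]
        simp [hcomp, Functor.map_add, Preadditive.comp_add, Preadditive.add_comp]))
    (fun f f' => by
      ext g
      simp only [AddMonoidHom.mk'_apply, AddMonoidHom.add_apply, ← map_add]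
      congr 1
      simp [hcomp, Preadditive.add_comp])

/-- Composition in the orbit category, as the unique bilinear extension of the
composition of homogeneous components. -/
def ocomp {X Y Z : C} : OrbitHom C X Y →+ (OrbitHom C Y Z →+ OrbitHom C X Z) :=
  DirectSum.toAddMonoid fun r =>
    (DirectSum.toAddMonoid fun s => (hcompHom C X Y Z r s).flip).flip

/-- The degree zero inclusion `Hom_C(X, Y) → Hom_C(X, F^0 Y)`. -/
def e₀ {X Y : C} (f : X ⟶ Y) : X ⟶ (shiftFunctor C (0 : ℤ)).obj Y :=
  f ≫ (shiftFunctorZero C ℤ).inv.app Y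

/-- The `CategoryStruct` of the orbit category `C/F`. -/
instance orbitStruct : CategoryStruct (Orbit C) where
  Hom X Y := OrbitHom C X.un Y.un
  id X := DirectSum.of _ 0 (e₀ C (𝟙 X.un))
  comp f g := ocomp C f g

instance (X Y : Orbit C) : AddCommGroup (X ⟶ Y) :=
  inferInstanceAs (AddCommGroup (OrbitHom C X.un Y.un))

/-- The orbit category `C/F`, given proofs of the category axioms. -/
def orbitCategory
    (h₁ : ∀ {X Y : Orbit C} (f : X ⟶ Y), 𝟙 X ≫ f = f)
    (h₂ : ∀ {X Y : Orbit C} (f : X ⟶ Y), f ≫ 𝟙 Y = f)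
    (h₃ : ∀ {W X Y Z : Orbit C} (f : W ⟶ X) (g : X ⟶ Y) (h : Y ⟶ Z),
      (f ≫ g) ≫ h = f ≫ g ≫ h) :
    Category (Orbit C) :=
  { id_comp := h₁, comp_id := h₂, assoc := h₃ }

/-- The action of the projection functor `π : C → C/F` on morphisms:
a morphism of `C` is placed in the degree `0` summand. -/
def oprojMap {X Y : C} (f : X ⟶ Y) : OrbitHom C X Y :=
  DirectSum.of _ 0 (e₀ C f)

/-- The projection functor `π : C → C/F`. -/
def oproj (h₁ : ∀ {X Y : Orbit C} (f : X ⟶ Y), 𝟙 X ≫ f = f)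
    (h₂ : ∀ {X Y : Orbit C} (f : X ⟶ Y), f ≫ 𝟙 Y = f)
    (h₃ : ∀ {W X Y Z : Orbit C} (f : W ⟶ X) (g : X ⟶ Y) (h : Y ⟶ Z),
      (f ≫ g) ≫ h = f ≫ g ≫ h)
    (p : ∀ {X Y Z : C} (f : X ⟶ Y) (g : Y ⟶ Z),
      oprojMap C (f ≫ g) = ocomp C (oprojMap C f) (oprojMap C g)) :
    @CategoryTheory.Functor C _ (Orbit C) (orbitCategory C @h₁ @h₂ @h₃) := by
  letI : Category (Orbit C) := orbitCategory C @h₁ @h₂ @h₃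
  exact { obj := Orbit.mk, map := fun f => oprojMap C f,
          map_id := fun _ => rfl, map_comp := fun f g => p f g }


universe v₂ u₂

variable {D : Type u₂} [Category.{v₂} D] [Preadditive D] [HasFiniteBiproducts D]

/-- The action on morphisms of the induced functor `H : C/F → D`, determined by a
family of isomorphisms `ε j Y : G(F^j Y) ≅ G(Y)`: the homogeneous morphism
`f : X → F^j Y` of degree `j` is sent to `G(f) ≫ (ε j Y).hom`. -/
def inducedMap (G : C ⥤ D) [G.Additive]
    (ε : ∀ (j : ℤ) (Y : C), G.obj ((shiftFunctor C j).obj Y) ≅ G.obj Y)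
    {X Y : Orbit C} (φ : X ⟶ Y) : G.obj X.un ⟶ G.obj Y.un :=
  DirectSum.toAddMonoid
    (fun j => AddMonoidHom.mk' (fun f : X.un ⟶ (shiftFunctor C j).obj Y.un =>
        G.map f ≫ (ε j Y.un).hom)
      (fun f f' => by simp [Functor.map_add, Preadditive.add_comp])) φ

/-- The induced functor `H : C/F → D`, given the functoriality proofs. -/
def inducedFunctor
    (h₁ : ∀ {X Y : Orbit C} (f : X ⟶ Y), 𝟙 X ≫ f = f)
    (h₂ : ∀ {X Y : Orbit C} (f : X ⟶ Y), f ≫ 𝟙 Y = f)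
    (h₃ : ∀ {W X Y Z : Orbit C} (f : W ⟶ X) (g : X ⟶ Y) (h : Y ⟶ Z),
      (f ≫ g) ≫ h = f ≫ g ≫ h)
    (G : C ⥤ D) [G.Additive]
    (ε : ∀ (j : ℤ) (Y : C), G.obj ((shiftFunctor C j).obj Y) ≅ G.obj Y)
    (q₁ : ∀ X : Orbit C, inducedMap C G ε (𝟙 X) = 𝟙 (G.obj X.un))
    (q₂ : ∀ {X Y Z : Orbit C} (f : X ⟶ Y) (g : Y ⟶ Z),
      inducedMap C G ε (f ≫ g) = inducedMap C G ε f ≫ inducedMap C G ε g) :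
    @CategoryTheory.Functor (Orbit C) (orbitCategory C @h₁ @h₂ @h₃) D _ := by
  letI : Category (Orbit C) := orbitCategory C @h₁ @h₂ @h₃
  exact { obj := fun X => G.obj X.un, map := fun φ => inducedMap C G ε φ,
          map_id := q₁, map_comp := fun f g => q₂ f g }

/-- The body of Statement 5. -/
def Statement5Body
    (h₁ : ∀ {X Y : Orbit C} (f : X ⟶ Y), 𝟙 X ≫ f = f)
    (h₂ : ∀ {X Y : Orbit C} (f : X ⟶ Y), f ≫ 𝟙 Y = f)
    (h₃ : ∀ {W X Y Z : Orbit C} (f : W ⟶ X) (g : X ⟶ Y) (h : Y ⟶ Z),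
      (f ≫ g) ≫ h = f ≫ g ≫ h)
    (hadd : ∀ (X Y Z : Orbit C) (f f' : X ⟶ Y) (g : Y ⟶ Z),
      (f + f') ≫ g = f ≫ g + f' ≫ g)
    (hadd' : ∀ (X Y Z : Orbit C) (f : X ⟶ Y) (g g' : Y ⟶ Z),
      f ≫ (g + g') = f ≫ g + f ≫ g')
    (p : ∀ {X Y Z : C} (f : X ⟶ Y) (g : Y ⟶ Z),
      oprojMap C (f ≫ g) = ocomp C (oprojMap C f) (oprojMap C g))
    (G : C ⥤ D) [G.Additive] (η : shiftFunctor C (1 : ℤ) ⋙ G ≅ G) : Prop :=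
  letI cat : Category (Orbit C) := orbitCategory C @h₁ @h₂ @h₃
  letI pre : Preadditive (Orbit C) :=
    { homGroup := fun X Y => (inferInstance : AddCommGroup (OrbitHom C X.un Y.un)),
      add_comp := hadd, comp_add := hadd' }
  -- `ε j Y : G(F^j Y) ≅ G Y` is the isomorphism obtained by iterating `η`:
  ∃ ε : ∀ (j : ℤ) (Y : C), G.obj ((shiftFunctor C j).obj Y) ≅ G.obj Y,
    (∀ Y : C, ε 0 Y = G.mapIso ((shiftFunctorZero C ℤ).app Y)) ∧
    (∀ (j : ℤ) (Y : C),
      ε (j + 1) Y =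
        G.mapIso ((shiftFunctorAdd' C j 1 (j + 1) rfl).app Y) ≪≫
          η.app ((shiftFunctor C j).obj Y) ≪≫ ε j Y) ∧
    ∃ (q₁ : ∀ X : Orbit C, inducedMap C G ε (𝟙 X) = 𝟙 (G.obj X.un))
      (q₂ : ∀ {X Y Z : Orbit C} (f : X ⟶ Y) (g : Y ⟶ Z),
        inducedMap C G ε (f ≫ g) = inducedMap C G ε f ≫ inducedMap C G ε g),
      -- `H` is additive:
      (inducedFunctor C @h₁ @h₂ @h₃ G ε q₁ @q₂).Additive ∧
      -- `H` agrees with `G` on objects: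
      (∀ X : C, (inducedFunctor C @h₁ @h₂ @h₃ G ε q₁ @q₂).obj (Orbit.mk X) = G.obj X) ∧
      -- `H` sends a homogeneous morphism `f : X ⟶ F^j Y` of degree `j` to
      -- `G(f) ≫ (ε j Y).hom`:
      (∀ (j : ℤ) (X Y : C) (f : X ⟶ (shiftFunctor C j).obj Y),
        (inducedFunctor C @h₁ @h₂ @h₃ G ε q₁ @q₂).map
            (show Orbit.mk X ⟶ Orbit.mk Y from
              DirectSum.of (fun i => X ⟶ (shiftFunctor C i).obj Y) j f) =
          G.map f ≫ (ε j Y).hom) ∧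
      -- `H ∘ π = G` as functors `C ⥤ D`:
      oproj C @h₁ @h₂ @h₃ @p ⋙ inducedFunctor C @h₁ @h₂ @h₃ G ε q₁ @q₂ = G

/-!
Iterating `η` gives isomorphisms `ε_j : G ∘ F^j ≅ G` for every `j ∈ ℤ`; building them as
isomorphisms of functors makes them natural for free. By induction on `r`, using naturality of
`η` and the associativity of the shift once per step, they are compatible with the
isomorphisms `F^r ∘ F^s ≅ F^(r+s)`: `ε_(r+s) = ε_s ∘ ε_r F^s`. This is exactly what makes
`f ↦ G(f) ≫ ε_j` multiplicative on homogeneous morphisms, and bilinearity extends it to all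
of `C/F`. The category axioms of `C/F` are checked the same way, on homogeneous components.
-/

section OrbitCategory

variable {C}

-- The target degree `c` is left free so that different bracketings of `r + s + t` can be
-- compared without transporting along `eqToHom`.
lemma ocomp_of_of {X Y Z : C} {r s : ℤ} (c : ℤ) (h : r + s = c)
    (f : X ⟶ (shiftFunctor C r).obj Y) (g : Y ⟶ (shiftFunctor C s).obj Z) :
    ocomp C (DirectSum.of (fun j => X ⟶ (shiftFunctor C j).obj Y) r f)
        (DirectSum.of (fun j => Y ⟶ (shiftFunctor C j).obj Z) s g) =
      DirectSum.of (fun j => X ⟶ (shiftFunctor C j).obj Z) c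
        (f ≫ (shiftFunctor C r).map g ≫
          (shiftFunctorAdd' C s r c (by rw [add_comm, h])).inv.app Z) := by
  subst h
  simp only [ocomp, DirectSum.toAddMonoid_of, AddMonoidHom.flip_apply]
  rfl

lemma id_ocomp {X Y : Orbit C} (f : X ⟶ Y) : ocomp C (𝟙 X) f = f := by
  change ocomp C (DirectSum.of _ 0 (e₀ C (𝟙 X.un))) f = f
  induction f using DirectSum.induction_on with
  | zero => exact map_zero _
  | add f f' hf hf' => rw [map_add, hf, hf']
  | of s g =>
    rw [ocomp_of_of s (zero_add s), shiftFunctorAdd'_add_zero_inv_app]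
    simp [e₀]

lemma ocomp_id {X Y : Orbit C} (f : X ⟶ Y) : ocomp C f (𝟙 Y) = f := by
  change ocomp C f (DirectSum.of _ 0 (e₀ C (𝟙 Y.un))) = f
  induction f using DirectSum.induction_on with
  | zero => simp
  | add f f' hf hf' => rw [map_add, AddMonoidHom.add_apply, hf, hf']
  | of r f =>
    rw [ocomp_of_of r (add_zero r), shiftFunctorAdd'_zero_add_inv_app]
    simp [e₀, ← Functor.map_comp]

lemma ocomp_assoc {W X Y Z : Orbit C} (f : W ⟶ X) (g : X ⟶ Y) (h : Y ⟶ Z) :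
    ocomp C (ocomp C f g) h = ocomp C f (ocomp C g h) := by
  induction f using DirectSum.induction_on with
  | zero => simp
  | add f f' hf hf' => simp only [map_add, AddMonoidHom.add_apply, hf, hf']
  | of r f =>
  induction g using DirectSum.induction_on with
  | zero => simp
  | add g g' hg hg' => simp only [map_add, AddMonoidHom.add_apply, hg, hg']
  | of s g =>
  induction h using DirectSum.induction_on with
  | zero => simp
  | add h h' hh hh' => simp only [map_add, hh, hh']
  | of t h =>
    rw [ocomp_of_of (r + s) rfl, ocomp_of_of (r + s + t) rfl, ocomp_of_of (s + t) rfl,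
      ocomp_of_of (r + s + t) (add_assoc r s t).symm]
    congr 1
    simp only [Functor.map_comp, Category.assoc]
    rw [← NatTrans.naturality_assoc,
      ← shiftFunctorAdd'_assoc_inv_app t s r _ _ _ (add_comm t s) (add_comm s r) (by abel)]
    rfl

lemma ocomp_add_left (X Y Z : Orbit C) (f f' : X ⟶ Y) (g : Y ⟶ Z) :
    ocomp C (f + f') g = ocomp C f g + ocomp C f' g := by
  rw [map_add, AddMonoidHom.add_apply]

lemma ocomp_add_right (X Y Z : Orbit C) (f : X ⟶ Y) (g g' : Y ⟶ Z) :
    ocomp C f (g + g') = ocomp C f g + ocomp C f g' :=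
  map_add _ g g'

lemma oprojMap_comp {X Y Z : C} (f : X ⟶ Y) (g : Y ⟶ Z) :
    oprojMap C (f ≫ g) = ocomp C (oprojMap C f) (oprojMap C g) := by
  rw [oprojMap, oprojMap, oprojMap, ocomp_of_of 0 (add_zero 0), shiftFunctorAdd'_add_zero_inv_app]
  congr 1
  simp only [e₀, Category.assoc]
  rw [← (shiftFunctorZero C ℤ).inv.naturality_assoc]
  simp

end OrbitCategory

section IteratedIso

variable {E : Type*} [Category E] [HasShift E ℤ] {B : Type*} [Category B] (G : E ⥤ B)
  (η : shiftFunctor E (1 : ℤ) ⋙ G ≅ G)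

def shiftSuccCompIso (j : ℤ) : shiftFunctor E (j + 1) ⋙ G ≅ shiftFunctor E j ⋙ G :=
  Functor.isoWhiskerRight (shiftFunctorAdd' E j 1 (j + 1) rfl) G ≪≫ Functor.associator _ _ _ ≪≫
    Functor.isoWhiskerLeft (shiftFunctor E j) η

def shiftCompIsoOfOne : ∀ j : ℤ, shiftFunctor E j ⋙ G ≅ G
  | 0 => Functor.isoWhiskerRight (shiftFunctorZero E ℤ) G ≪≫ G.leftUnitor
  | (n + 1 : ℕ) => shiftSuccCompIso G η n ≪≫ shiftCompIsoOfOne n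
  | Int.negSucc n => (shiftSuccCompIso G η (Int.negSucc n)).symm ≪≫
      shiftCompIsoOfOne (Int.negSucc n + 1)
  termination_by j => j.natAbs
  decreasing_by all_goals simp_wf; omega

lemma shiftCompIsoOfOne_zero_hom_app (Y : E) :
    (shiftCompIsoOfOne G η 0).hom.app Y = G.map ((shiftFunctorZero E ℤ).hom.app Y) := by
  rw [shiftCompIsoOfOne.eq_1]
  simp

lemma shiftCompIsoOfOne_succ (j : ℤ) :
    shiftCompIsoOfOne G η (j + 1) = shiftSuccCompIso G η j ≪≫ shiftCompIsoOfOne G η j := by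
  obtain (n | n) := j
  · exact shiftCompIsoOfOne.eq_2 G η n
  · rw [shiftCompIsoOfOne.eq_3 G η n, Iso.self_symm_id_assoc]

lemma shiftCompIsoOfOne_hom_app_of_add_one (j c : ℤ) (h : j + 1 = c) (Y : E) :
    (shiftCompIsoOfOne G η c).hom.app Y =
      G.map ((shiftFunctorAdd' E j 1 c h).hom.app Y) ≫ η.hom.app ((shiftFunctor E j).obj Y) ≫
        (shiftCompIsoOfOne G η j).hom.app Y := by
  subst h
  simp [shiftCompIsoOfOne_succ, shiftSuccCompIso]

lemma shiftCompIsoOfOne_hom_app_add_iff (r s c r' c' : ℤ) (h : s + r = c) (h' : s + r' = c')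
    (hr : r + 1 = r') (hc : c + 1 = c') (Z : E) :
    (shiftCompIsoOfOne G η c').hom.app Z =
        G.map ((shiftFunctorAdd' E s r' c' h').hom.app Z) ≫
          (shiftCompIsoOfOne G η r').hom.app ((shiftFunctor E s).obj Z) ≫
          (shiftCompIsoOfOne G η s).hom.app Z ↔
      (shiftCompIsoOfOne G η c).hom.app Z =
        G.map ((shiftFunctorAdd' E s r c h).hom.app Z) ≫
          (shiftCompIsoOfOne G η r).hom.app ((shiftFunctor E s).obj Z) ≫
          (shiftCompIsoOfOne G η s).hom.app Z := by
  subst hr hc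
  have hη := η.hom.naturality ((shiftFunctorAdd' E s r c h).hom.app Z)
  simp only [Functor.comp_map, Functor.comp_obj] at hη
  rw [shiftCompIsoOfOne_hom_app_of_add_one G η c _ rfl,
    shiftCompIsoOfOne_hom_app_of_add_one G η r _ rfl, Category.assoc, ← G.map_comp_assoc,
    ← shiftFunctorAdd'_assoc_hom_app s r 1 c (r + 1) (c + 1) h rfl (by omega),
    G.map_comp_assoc, Category.assoc, reassoc_of% hη, cancel_epi, cancel_epi]

lemma shiftCompIsoOfOne_hom_app_add (r s c : ℤ) (h : s + r = c) (Z : E) :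
    (shiftCompIsoOfOne G η c).hom.app Z =
      G.map ((shiftFunctorAdd' E s r c h).hom.app Z) ≫
        (shiftCompIsoOfOne G η r).hom.app ((shiftFunctor E s).obj Z) ≫
        (shiftCompIsoOfOne G η s).hom.app Z := by
  induction r using Int.induction_on generalizing c with
  | zero =>
    obtain rfl : c = s := by omega
    simp [shiftFunctorAdd'_add_zero_hom_app, shiftCompIsoOfOne_zero_hom_app, ← G.map_comp_assoc]
  | succ r ih =>
    exact (shiftCompIsoOfOne_hom_app_add_iff G η r s (s + r) _ _ rfl h rfl (by omega) Z).2
      (ih _ rfl)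
  | pred r ih =>
    exact (shiftCompIsoOfOne_hom_app_add_iff G η _ s c _ _ h rfl (by omega) (by omega) Z).1
      (ih _ (by omega))

end IteratedIso

section InducedFunctor

variable {C} {B : Type*} [Category B] [Preadditive B] (G : C ⥤ B) [G.Additive]
  (η : shiftFunctor C (1 : ℤ) ⋙ G ≅ G)

lemma inducedMap_of (ε : ∀ (j : ℤ) (Y : C), G.obj ((shiftFunctor C j).obj Y) ≅ G.obj Y)
    (j : ℤ) {X Y : Orbit C} (f : X.un ⟶ (shiftFunctor C j).obj Y.un) :
    inducedMap C G ε (DirectSum.of (fun i => X.un ⟶ (shiftFunctor C i).obj Y.un) j f) =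
      G.map f ≫ (ε j Y.un).hom := by
  rw [inducedMap, DirectSum.toAddMonoid_of]
  rfl

lemma inducedMap_add (ε : ∀ (j : ℤ) (Y : C), G.obj ((shiftFunctor C j).obj Y) ≅ G.obj Y)
    {X Y : Orbit C} (f g : X ⟶ Y) :
    inducedMap C G ε (f + g) = inducedMap C G ε f + inducedMap C G ε g :=
  map_add _ f g

lemma inducedMap_oprojMap {X Y : Orbit C} (f : X.un ⟶ Y.un) :
    inducedMap C G (fun j Y => (shiftCompIsoOfOne G η j).app Y) (oprojMap C f) = G.map f := by
  rw [oprojMap, inducedMap_of, Iso.app_hom, shiftCompIsoOfOne_zero_hom_app, e₀,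
    ← G.map_comp, Category.assoc, Iso.inv_hom_id_app]
  simp

lemma inducedMap_id (X : Orbit C) :
    inducedMap C G (fun j Y => (shiftCompIsoOfOne G η j).app Y) (𝟙 X) = 𝟙 (G.obj X.un) :=
  (inducedMap_oprojMap G η (𝟙 X.un)).trans (G.map_id X.un)

lemma inducedMap_ocomp {X Y Z : Orbit C} (f : X ⟶ Y) (g : Y ⟶ Z) :
    inducedMap C G (fun j Y => (shiftCompIsoOfOne G η j).app Y) (ocomp C f g) =
      inducedMap C G (fun j Y => (shiftCompIsoOfOne G η j).app Y) f ≫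
        inducedMap C G (fun j Y => (shiftCompIsoOfOne G η j).app Y) g := by
  induction f using DirectSum.induction_on with
  | zero => simp [inducedMap]
  | add f f' hf hf' =>
    rw [map_add, AddMonoidHom.add_apply, inducedMap_add, inducedMap_add, hf, hf',
      Preadditive.add_comp]
  | of r f =>
  induction g using DirectSum.induction_on with
  | zero => simp [inducedMap]
  | add g g' hg hg' =>
    rw [map_add, inducedMap_add, inducedMap_add, hg, hg', Preadditive.comp_add]
  | of s g =>
    rw [ocomp_of_of (r + s) rfl, inducedMap_of, inducedMap_of, inducedMap_of]
    have hnat := (shiftCompIsoOfOne G η r).hom.naturality g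
    simp only [Functor.comp_map] at hnat
    simp only [Iso.app_hom]
    rw [shiftCompIsoOfOne_hom_app_add G η r s (r + s) (add_comm s r), ← G.map_comp_assoc]
    simp only [Category.assoc, Iso.inv_hom_id_app, Functor.comp_obj, Category.comp_id]
    rw [G.map_comp, Category.assoc, reassoc_of% hnat]

end InducedFunctor

/-- Let `C` be an additive category, `F : C → C` an additive
automorphism, `D` an additive category, and `G : C → D` an additive functor equipped
with a natural isomorphism `η : G ∘ F ≅ G`. Then `G` factors through the projection:
there exists an additive functor `H : C/F → D` which agrees with `G` on objects, sends
a homogeneous morphism `f : X → F^j Y` of degree `j` to the composite of `G(f)` with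
the isomorphism `G(F^j Y) ≅ G(Y)` obtained by iterating `η`, and satisfies
`H ∘ π = G` as functors `C → D`. -/
theorem statement5 (G : C ⥤ D) [G.Additive] (η : shiftFunctor C (1 : ℤ) ⋙ G ≅ G) :
    ∃ (h₁ : ∀ {X Y : Orbit C} (f : X ⟶ Y), 𝟙 X ≫ f = f)
      (h₂ : ∀ {X Y : Orbit C} (f : X ⟶ Y), f ≫ 𝟙 Y = f)
      (h₃ : ∀ {W X Y Z : Orbit C} (f : W ⟶ X) (g : X ⟶ Y) (h : Y ⟶ Z),
        (f ≫ g) ≫ h = f ≫ g ≫ h)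
      (hadd : ∀ (X Y Z : Orbit C) (f f' : X ⟶ Y) (g : Y ⟶ Z),
        (f + f') ≫ g = f ≫ g + f' ≫ g)
      (hadd' : ∀ (X Y Z : Orbit C) (f : X ⟶ Y) (g g' : Y ⟶ Z),
        f ≫ (g + g') = f ≫ g + f ≫ g')
      (p : ∀ {X Y Z : C} (f : X ⟶ Y) (g : Y ⟶ Z),
        oprojMap C (f ≫ g) = ocomp C (oprojMap C f) (oprojMap C g)),
      Statement5Body C @h₁ @h₂ @h₃ hadd hadd' @p G η := by
  refine ⟨id_ocomp, ocomp_id, ocomp_assoc, ocomp_add_left, ocomp_add_right, oprojMap_comp, ?_⟩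
  let _ : Category (Orbit C) := orbitCategory C id_ocomp ocomp_id ocomp_assoc
  let _ : Preadditive (Orbit C) :=
    ⟨fun X Y => (inferInstance : AddCommGroup (OrbitHom C X.un Y.un)), ocomp_add_left,
      ocomp_add_right⟩
  refine ⟨fun j Y => (shiftCompIsoOfOne G η j).app Y, fun Y => ?_, fun j Y => ?_,
    inducedMap_id G η, inducedMap_ocomp G η, ⟨inducedMap_add G _ _ _⟩, fun _ => rfl,
    fun j _ _ f => inducedMap_of G _ j f, ?_⟩
  · ext
    exact shiftCompIsoOfOne_zero_hom_app G η Y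
  · ext
    exact shiftCompIsoOfOne_hom_app_of_add_one G η j _ rfl Y
  · exact CategoryTheory.Functor.ext (fun _ => rfl) fun _ _ f =>
      (inducedMap_oprojMap G η f).trans (by simp : G.map f = 𝟙 _ ≫ G.map f ≫ 𝟙 _)

end OrbitFormalization
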